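/- Let A, Â ∈ ℝ^{n×n} be symmetric matrices with 0 ⪯ Â ⪯ A, and set P̂ := Â + I and M̂ := P̂^{-1/2}(A+I)P̂^{-1/2}. Then for every index i (with eigenvalues ordered decreasingly), 1 ≤ λᵢ(M̂) ≤ λᵢ(A + I); consequently ‖log(M̂)‖_F ≤ ‖log(A + I)‖_F. -/

import Mathlib

/-!
Write `P̂ = S²` with `S = P̂^{1/2}` and `M̂ = S⁻¹(A + I)S⁻¹`. Then `M̂ - I = S⁻¹(A - Â)S⁻¹ ⪰ 0`,
so every eigenvalue of `M̂` is at least `1`. Conversely `Sᵀ M̂ S = A + I` and `|Sw| ≥ |w|`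
(as `S² = Â + I ⪰ I`), so `S` maps the span of the bottom `n - k` eigenvectors of `A + I`
to a subspace on which the Rayleigh quotient of `M̂` is at most `λₖ(A + I)`; Courant–Fischer
gives `λₖ(M̂) ≤ λₖ(A + I)`. Since `log` is increasing and nonnegative on `[1, ∞)`, squaring
and summing the logarithms of the eigenvalues gives the Frobenius bound.
-/

open MeasureTheory ProbabilityTheory Matrix

/-- Matrix logarithm of a real symmetric matrix, obtained by applying the real logarithm
to the eigenvalues in a spectral decomposition. -/
noncomputable def matLog {n : ℕ} (B : Matrix (Fin n) (Fin n) ℝ) : Matrix (Fin n) (Fin n) ℝ :=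
  if hB : B.IsHermitian then
    (hB.eigenvectorUnitary : Matrix (Fin n) (Fin n) ℝ) *
      Matrix.diagonal (fun i => Real.log (hB.eigenvalues i)) *
      (star (hB.eigenvectorUnitary : Matrix (Fin n) (Fin n) ℝ))
  else 0

open scoped Classical in
/-- `B^{-1/2}`: the inverse of the unique positive semidefinite square root of a
positive semidefinite matrix `B`. -/
noncomputable def invSqrt {n : ℕ} (B : Matrix (Fin n) (Fin n) ℝ) : Matrix (Fin n) (Fin n) ℝ :=
  if hB : B.PosSemidef then
    ((hB.1.eigenvectorUnitary : Matrix (Fin n) (Fin n) ℝ) *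
      Matrix.diagonal (fun i => Real.sqrt (hB.1.eigenvalues i)) *
      (star (hB.1.eigenvectorUnitary : Matrix (Fin n) (Fin n) ℝ)))⁻¹
  else 0

/-- Squared Frobenius norm of a matrix. -/
noncomputable def frobSq {m n : ℕ} (H : Matrix (Fin m) (Fin n) ℝ) : ℝ :=
  ∑ i, ∑ j, (H i j) ^ 2

/-- Singular values of a matrix (square roots of the eigenvalues of `HᴴH`). -/
noncomputable def singVals {m n : ℕ} (H : Matrix (Fin m) (Fin n) ℝ) : Fin n → ℝ :=
  fun i => Real.sqrt (((by simpa using Matrix.isHermitian_conjTranspose_mul_self H :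
    (Hᵀ * H).IsHermitian)).eigenvalues i)

/-- Nuclear norm: sum of the singular values. -/
noncomputable def nuclearNorm {m n : ℕ} (H : Matrix (Fin m) (Fin n) ℝ) : ℝ :=
  ∑ i, singVals H i

/-- Spectral norm: largest singular value. -/
noncomputable def specNorm {m n : ℕ} (H : Matrix (Fin m) (Fin n) ℝ) : ℝ :=
  ⨆ i, singVals H i

/-- Eigenvalues of a symmetric matrix, sorted in decreasing order
(`eigDesc B i` is the `i`-th largest eigenvalue). -/
noncomputable def eigDesc {n : ℕ} (B : Matrix (Fin n) (Fin n) ℝ) : Fin n → ℝ :=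
  if hB : B.IsHermitian then
    fun i => (hB.eigenvalues ∘ Tuple.sort hB.eigenvalues) i.rev
  else 0

/-- Law of a standard Gaussian random vector in `ℝⁿ` (i.i.d. `gaussianReal 0 1` entries). -/
noncomputable def stdGaussian (n : ℕ) : Measure (Fin n → ℝ) :=
  Measure.pi fun _ => gaussianReal 0 1

/-- Law of a random `n × ℓ` matrix with i.i.d. standard Gaussian entries. -/
noncomputable def stdGaussianMatrix (n ℓ : ℕ) : Measure (Fin n → Fin ℓ → ℝ) :=
  Measure.pi fun _ => Measure.pi fun _ => gaussianReal 0 1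

/-- The truncated-spectral-decomposition preconditioner `P_r = A_r + I`, where
`A_r = U_r Λ_r U_rᵀ` keeps the `r` leading eigenvalues. -/
noncomputable def truncP {n : ℕ} (U : Matrix (Fin n) (Fin n) ℝ) (lam : Fin n → ℝ) (r : ℕ) :
    Matrix (Fin n) (Fin n) ℝ :=
  U * Matrix.diagonal (fun i : Fin n => if (i : ℕ) < r then lam i else 0) * Uᵀ + 1

/-- The idealized preconditioned matrix `M_r = P_r^{-1/2} (A + I) P_r^{-1/2}`. -/
noncomputable def truncM {n : ℕ} (A U : Matrix (Fin n) (Fin n) ℝ) (lam : Fin n → ℝ) (r : ℕ) :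
    Matrix (Fin n) (Fin n) ℝ :=
  invSqrt (truncP U lam r) * (A + 1) * invSqrt (truncP U lam r)

/-- The Nyström approximation `Â = AΩ(ΩᵀAΩ)⁻¹ΩᵀA`. -/
noncomputable def nystrom {n ℓ : ℕ} (A : Matrix (Fin n) (Fin n) ℝ)
    (Ω : Matrix (Fin n) (Fin ℓ) ℝ) : Matrix (Fin n) (Fin n) ℝ :=
  A * Ω * (Ωᵀ * A * Ω)⁻¹ * Ωᵀ * A

/-- The Nyström-preconditioned matrix `M̂ = P̂^{-1/2} (A + I) P̂^{-1/2}` with `P̂ = Â + I`. -/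
noncomputable def nysPrec {n ℓ : ℕ} (A : Matrix (Fin n) (Fin n) ℝ)
    (Ω : Matrix (Fin n) (Fin ℓ) ℝ) : Matrix (Fin n) (Fin n) ℝ :=
  invSqrt (nystrom A Ω + 1) * (A + 1) * invSqrt (nystrom A Ω + 1)

open Module

lemma Matrix.dotProduct_mul_mul_transpose_mulVec {n : Type*} [Fintype n]
    (U X : Matrix n n ℝ) (v : n → ℝ) :
    v ⬝ᵥ ((U * X * Uᵀ) *ᵥ v) = (Uᵀ *ᵥ v) ⬝ᵥ (X *ᵥ (Uᵀ *ᵥ v)) := by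
  rw [← mulVec_mulVec, ← mulVec_mulVec, dotProduct_mulVec, mulVec_transpose]

section Spectral

variable {n : ℕ} {B : Matrix (Fin n) (Fin n) ℝ}

noncomputable def eigDescPerm (hB : B.IsHermitian) : Equiv.Perm (Fin n) :=
  Fin.revPerm.trans (Tuple.sort hB.eigenvalues)

lemma eigDesc_eq (hB : B.IsHermitian) : eigDesc B = hB.eigenvalues ∘ eigDescPerm hB := by
  rw [eigDesc, dif_pos hB]
  rfl

lemma eigDesc_antitone (hB : B.IsHermitian) : Antitone (eigDesc B) := by
  intro i j hij
  rw [eigDesc_eq hB]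
  exact Tuple.monotone_sort hB.eigenvalues (Fin.rev_le_rev.mpr hij)

lemma eigDesc_mem_spectrum (hB : B.IsHermitian) (k : Fin n) : eigDesc B k ∈ spectrum ℝ B := by
  rw [eigDesc_eq hB]
  exact hB.eigenvalues_mem_spectrum_real _

lemma eigDesc_nonneg (hB : B.PosSemidef) (k : Fin n) : 0 ≤ eigDesc B k := by
  rw [eigDesc_eq hB.isHermitian]
  exact hB.eigenvalues_nonneg _

lemma sum_comp_eigDesc (hB : B.IsHermitian) (f : ℝ → ℝ) :
    ∑ i, f (eigDesc B i) = ∑ i, f (hB.eigenvalues i) := by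
  rw [eigDesc_eq hB]
  exact Equiv.sum_comp (eigDescPerm hB) (f ∘ hB.eigenvalues)

lemma Matrix.IsHermitian.eigenvectorUnitary_mul_transpose (hB : B.IsHermitian) :
    (hB.eigenvectorUnitary : Matrix (Fin n) (Fin n) ℝ) * (hB.eigenvectorUnitary : Matrix _ _ ℝ)ᵀ
      = 1 :=
  Unitary.coe_mul_star_self hB.eigenvectorUnitary

lemma Matrix.IsHermitian.eq_eigenvectorUnitary_mul_diagonal (hB : B.IsHermitian) :
    B = (hB.eigenvectorUnitary : Matrix (Fin n) (Fin n) ℝ) * diagonal hB.eigenvalues *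
      (hB.eigenvectorUnitary : Matrix _ _ ℝ)ᵀ := by
  conv_lhs => rw [hB.spectral_theorem, Unitary.conjStarAlgAut_apply]
  rfl

/-- Coordinates in the orthonormal eigenbasis, listed by decreasing eigenvalue. -/
noncomputable def eigCoords (hB : B.IsHermitian) : (Fin n → ℝ) →ₗ[ℝ] (Fin n → ℝ) :=
  LinearMap.funLeft ℝ ℝ (eigDescPerm hB) ∘ₗ
    ((hB.eigenvectorUnitary : Matrix (Fin n) (Fin n) ℝ)ᵀ).mulVecLin

lemma sum_comp_eigCoords (hB : B.IsHermitian) (f : ℝ → ℝ → ℝ) (v : Fin n → ℝ) :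
    ∑ m, f (eigDesc B m) (eigCoords hB v m) =
      ∑ i, f (hB.eigenvalues i) (((hB.eigenvectorUnitary : Matrix _ _ ℝ)ᵀ *ᵥ v) i) := by
  rw [eigDesc_eq hB]
  exact Equiv.sum_comp (eigDescPerm hB)
    (fun i => f (hB.eigenvalues i) (((hB.eigenvectorUnitary : Matrix _ _ ℝ)ᵀ *ᵥ v) i))

lemma sum_sq_eigCoords (hB : B.IsHermitian) (v : Fin n → ℝ) :
    ∑ m, eigCoords hB v m ^ 2 = v ⬝ᵥ v := by
  have h := dotProduct_mul_mul_transpose_mulVec (hB.eigenvectorUnitary : Matrix _ _ ℝ) 1 v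
  rw [Matrix.mul_one, hB.eigenvectorUnitary_mul_transpose, one_mulVec, one_mulVec] at h
  rw [h, sum_comp_eigCoords hB (fun _ x => x ^ 2)]
  simp only [dotProduct, sq]

lemma sum_eigDesc_mul_sq_eigCoords (hB : B.IsHermitian) (v : Fin n → ℝ) :
    ∑ m, eigDesc B m * eigCoords hB v m ^ 2 = v ⬝ᵥ (B *ᵥ v) := by
  conv_rhs => rw [hB.eq_eigenvectorUnitary_mul_diagonal, dotProduct_mul_mul_transpose_mulVec]
  rw [sum_comp_eigCoords hB (fun l x => l * x ^ 2)]
  simp only [dotProduct, mulVec_diagonal]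
  exact Finset.sum_congr rfl fun i _ => by ring

end Spectral

section CourantFischer

variable {n : ℕ} {B : Matrix (Fin n) (Fin n) ℝ}

lemma eigDesc_le_of_forall_mem (hB : B.IsHermitian) (k : Fin n) {c : ℝ}
    (T : Submodule ℝ (Fin n → ℝ)) (hdim : n ≤ k + finrank ℝ T)
    (hT : ∀ v ∈ T, v ⬝ᵥ (B *ᵥ v) ≤ c * (v ⬝ᵥ v)) : eigDesc B k ≤ c := by
  let tail : (Fin n → ℝ) →ₗ[ℝ] (Finset.Ioi k → ℝ) :=
    LinearMap.funLeft ℝ ℝ Subtype.val ∘ₗ eigCoords hB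
  obtain ⟨⟨v, hvT⟩, hv, hv0⟩ := Submodule.exists_mem_ne_zero_of_ne_bot <|
    LinearMap.ker_ne_bot_of_finrank_lt (f := tail.domRestrict T) (by
      rw [Module.finrank_fintype_fun_eq_card, Fintype.card_coe, Fin.card_Ioi]
      omega)
  have hzero : ∀ m, k < m → eigCoords hB v m = 0 := fun m hm =>
    congr_fun (LinearMap.mem_ker.mp hv) ⟨m, Finset.mem_Ioi.mpr hm⟩
  have hlow : eigDesc B k * (v ⬝ᵥ v) ≤ v ⬝ᵥ (B *ᵥ v) := by
    rw [← sum_sq_eigCoords hB, ← sum_eigDesc_mul_sq_eigCoords hB, Finset.mul_sum]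
    refine Finset.sum_le_sum fun m _ => ?_
    rcases lt_or_ge k m with hkm | hmk
    · simp [hzero m hkm]
    · exact mul_le_mul_of_nonneg_right (eigDesc_antitone hB hmk) (sq_nonneg _)
  have hpos : 0 < v ⬝ᵥ v := by
    simpa using dotProduct_star_self_pos_iff.mpr (Subtype.coe_injective.ne hv0)
  exact le_of_mul_le_mul_right (hlow.trans (hT v hvT)) hpos

lemma exists_forall_mem_le_eigDesc (hB : B.IsHermitian) (k : Fin n) :
    ∃ T : Submodule ℝ (Fin n → ℝ), n ≤ k + finrank ℝ T ∧
      ∀ v ∈ T, v ⬝ᵥ (B *ᵥ v) ≤ eigDesc B k * (v ⬝ᵥ v) := by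
  let head : (Fin n → ℝ) →ₗ[ℝ] (Finset.Iio k → ℝ) :=
    LinearMap.funLeft ℝ ℝ Subtype.val ∘ₗ eigCoords hB
  refine ⟨LinearMap.ker head, ?_, fun v hv => ?_⟩
  · have hrank := head.finrank_range_add_finrank_ker
    have := Submodule.finrank_le (LinearMap.range head)
    rw [Module.finrank_fintype_fun_eq_card, Fintype.card_coe, Fin.card_Iio] at this
    rw [Module.finrank_fin_fun] at hrank
    omega
  · have hzero : ∀ m, m < k → eigCoords hB v m = 0 := fun m hm =>
      congr_fun hv ⟨m, Finset.mem_Iio.mpr hm⟩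
    rw [← sum_sq_eigCoords hB, ← sum_eigDesc_mul_sq_eigCoords hB, Finset.mul_sum]
    refine Finset.sum_le_sum fun m _ => ?_
    rcases lt_or_ge m k with hmk | hkm
    · simp [hzero m hmk]
    · exact mul_le_mul_of_nonneg_right (eigDesc_antitone hB hkm) (sq_nonneg _)

end CourantFischer

section Loewner

variable {n : ℕ}

lemma one_le_eigDesc_of_posSemidef_sub_one {M : Matrix (Fin n) (Fin n) ℝ} (hM : M.IsHermitian)
    (h : (M - 1).PosSemidef) (k : Fin n) : 1 ≤ eigDesc M k := by
  have hmem : eigDesc M k - 1 ∈ spectrum ℝ (M - 1) := by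
    rw [← map_one (algebraMap ℝ (Matrix (Fin n) (Fin n) ℝ)), ← spectrum.sub_singleton_eq]
    exact Set.sub_mem_sub (eigDesc_mem_spectrum hM k) rfl
  exact sub_nonneg.mp ((posSemidef_iff_isHermitian_and_spectrum_nonneg.mp h).2 hmem)

lemma eigDesc_le_of_transpose_mul_mul_eq {M B S : Matrix (Fin n) (Fin n) ℝ}
    (hM : M.IsHermitian) (hB : B.PosSemidef) (hS : IsUnit S) (hSMS : Sᵀ * M * S = B)
    (hSS : (Sᵀ * S - 1).PosSemidef) (k : Fin n) : eigDesc M k ≤ eigDesc B k := by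
  obtain ⟨T, hdim, hT⟩ := exists_forall_mem_le_eigDesc hB.isHermitian k
  have hinj : Function.Injective S.mulVecLin := mulVec_injective_iff_isUnit.mpr hS
  refine eigDesc_le_of_forall_mem hM k (T.map S.mulVecLin)
    (by rwa [← (Submodule.equivMapOfInjective _ hinj T).finrank_eq]) ?_
  rintro _ ⟨w, hw, rfl⟩
  have hquad : S *ᵥ w ⬝ᵥ (M *ᵥ (S *ᵥ w)) = w ⬝ᵥ (B *ᵥ w) := by
    rw [← hSMS, ← mulVec_mulVec, ← mulVec_mulVec, dotProduct_mulVec w, vecMul_transpose]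
  have hnorm : w ⬝ᵥ w ≤ S *ᵥ w ⬝ᵥ (S *ᵥ w) := by
    have := hSS.dotProduct_mulVec_nonneg w
    rwa [star_trivial, sub_mulVec, one_mulVec, dotProduct_sub, ← mulVec_mulVec,
      dotProduct_mulVec, vecMul_transpose, sub_nonneg] at this
  simp only [mulVecLin_apply]
  calc S *ᵥ w ⬝ᵥ (M *ᵥ (S *ᵥ w)) = w ⬝ᵥ (B *ᵥ w) := hquad
    _ ≤ eigDesc B k * (w ⬝ᵥ w) := hT w hw
    _ ≤ eigDesc B k * (S *ᵥ w ⬝ᵥ (S *ᵥ w)) :=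
      mul_le_mul_of_nonneg_left hnorm (eigDesc_nonneg hB k)

end Loewner

section FunctionalCalculus

variable {n : ℕ} {B : Matrix (Fin n) (Fin n) ℝ}

lemma matLog_eq_cfc (hB : B.IsHermitian) : matLog B = cfc Real.log B := by
  rw [matLog, dif_pos hB, hB.cfc_eq, IsHermitian.cfc, Unitary.conjStarAlgAut_apply]
  rfl

lemma trace_cfc (hB : B.IsHermitian) (f : ℝ → ℝ) :
    trace (cfc f B) = ∑ i, f (hB.eigenvalues i) := by
  rw [hB.cfc_eq, IsHermitian.cfc, Unitary.conjStarAlgAut_apply, trace_mul_cycle,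
    Unitary.coe_star_mul_self, Matrix.one_mul, trace_diagonal]
  rfl

lemma frobSq_eq_trace {m : ℕ} (H : Matrix (Fin m) (Fin n) ℝ) : frobSq H = trace (Hᵀ * H) := by
  rw [frobSq, trace, Finset.sum_comm]
  simp only [diag, mul_apply, transpose_apply, sq]

lemma frobSq_cfc (hB : B.IsHermitian) (f : ℝ → ℝ) :
    frobSq (cfc f B) = ∑ i, f (hB.eigenvalues i) ^ 2 := by
  have hsymm : (cfc f B)ᵀ = cfc f B := by
    rw [← conjTranspose_eq_transpose_of_trivial]
    exact (cfc_predicate f B : IsSelfAdjoint _)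
  have hf : ContinuousOn f (spectrum ℝ B) := B.finite_real_spectrum.continuousOn f
  rw [frobSq_eq_trace, hsymm, ← cfc_mul f f B, trace_cfc hB]
  simp only [sq]

lemma frobSq_matLog_le {M : Matrix (Fin n) (Fin n) ℝ} (hM : M.IsHermitian) (hB : B.IsHermitian)
    (h : ∀ k, 1 ≤ eigDesc M k ∧ eigDesc M k ≤ eigDesc B k) :
    frobSq (matLog M) ≤ frobSq (matLog B) := by
  rw [matLog_eq_cfc hM, matLog_eq_cfc hB, frobSq_cfc hM, frobSq_cfc hB,
    ← sum_comp_eigDesc hM (fun x => Real.log x ^ 2),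
    ← sum_comp_eigDesc hB (fun x => Real.log x ^ 2)]
  refine Finset.sum_le_sum fun k _ => ?_
  obtain ⟨h1, h2⟩ := h k
  exact pow_le_pow_left₀ (Real.log_nonneg h1) (Real.log_le_log (one_pos.trans_le h1) h2) 2

lemma cfc_sqrt_mul_self (hB : B.PosSemidef) : cfc Real.sqrt B * cfc Real.sqrt B = B := by
  rw [← cfc_mul Real.sqrt Real.sqrt B]
  conv_rhs => rw [← cfc_id' ℝ B hB.isHermitian]
  refine cfc_congr fun x hx => Real.mul_self_sqrt ?_
  exact (posSemidef_iff_isHermitian_and_spectrum_nonneg.mp hB).2 hx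

lemma invSqrt_eq (hB : B.PosSemidef) : invSqrt B = (cfc Real.sqrt B)⁻¹ := by
  rw [invSqrt, dif_pos hB, hB.isHermitian.cfc_eq, IsHermitian.cfc, Unitary.conjStarAlgAut_apply]
  rfl

end FunctionalCalculus

lemma Matrix.PosSemidef.inv_mul_mul_inv {n : ℕ} {A S : Matrix (Fin n) (Fin n) ℝ}
    (hA : A.PosSemidef) (hS : S.IsHermitian) : (S⁻¹ * A * S⁻¹).PosSemidef := by
  have hSi : (S⁻¹)ᴴ = S⁻¹ := by rw [conjTranspose_nonsing_inv, hS.eq]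
  simpa only [hSi] using hA.mul_mul_conjTranspose_same S⁻¹

lemma eigDesc_inv_mul_mul_inv_bounds {n : ℕ} {A Ahat S : Matrix (Fin n) (Fin n) ℝ}
    (hpsd : Ahat.PosSemidef) (hle : (A - Ahat).PosSemidef) (hS : S.IsHermitian)
    (hSS : S * S = Ahat + 1) (k : Fin n) :
    1 ≤ eigDesc (S⁻¹ * (A + 1) * S⁻¹) k ∧ eigDesc (S⁻¹ * (A + 1) * S⁻¹) k ≤ eigDesc (A + 1) k := by
  have hA : (A + 1).PosSemidef := by simpa using (hle.add hpsd).add PosSemidef.one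
  have hSu : IsUnit S := by
    refine isUnit_of_mul_isUnit_left (y := S) ?_
    rw [hSS]
    exact (PosDef.posSemidef_add hpsd PosDef.one).isUnit
  have hdet : IsUnit S.det := (isUnit_iff_isUnit_det S).mp hSu
  have hSt : Sᵀ = S := by rw [← conjTranspose_eq_transpose_of_trivial, hS.eq]
  have hM : (S⁻¹ * (A + 1) * S⁻¹).PosSemidef := hA.inv_mul_mul_inv hS
  constructor
  · refine one_le_eigDesc_of_posSemidef_sub_one hM.isHermitian ?_ k
    have hconj : S⁻¹ * (Ahat + 1) * S⁻¹ = 1 := by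
      rw [← hSS, ← Matrix.mul_assoc, Matrix.mul_assoc (S⁻¹ * S), nonsing_inv_mul S hdet,
        Matrix.one_mul, mul_nonsing_inv S hdet]
    have hsub : S⁻¹ * (A - Ahat) * S⁻¹ = S⁻¹ * (A + 1) * S⁻¹ - S⁻¹ * (Ahat + 1) * S⁻¹ := by
      noncomm_ring
    simpa only [hsub, hconj] using hle.inv_mul_mul_inv hS
  · refine eigDesc_le_of_transpose_mul_mul_eq hM.isHermitian hA hSu ?_ ?_ k
    · rw [hSt, ← Matrix.mul_assoc, ← Matrix.mul_assoc, mul_nonsing_inv S hdet, Matrix.one_mul,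
        Matrix.mul_assoc, nonsing_inv_mul S hdet, Matrix.mul_one]
    · rwa [hSt, hSS, add_sub_cancel_right]

theorem stmt18_general {n : ℕ} (A Ahat : Matrix (Fin n) (Fin n) ℝ)
    (hpsd : Ahat.PosSemidef) (hle : (A - Ahat).PosSemidef) :
    (∀ i : Fin n,
        1 ≤ eigDesc (invSqrt (Ahat + 1) * (A + 1) * invSqrt (Ahat + 1)) i ∧
          eigDesc (invSqrt (Ahat + 1) * (A + 1) * invSqrt (Ahat + 1)) i ≤ eigDesc (A + 1) i) ∧
      Real.sqrt (frobSq (matLog (invSqrt (Ahat + 1) * (A + 1) * invSqrt (Ahat + 1))))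
        ≤ Real.sqrt (frobSq (matLog (A + 1))) := by
  have hA : (A + 1).PosSemidef := by simpa using (hle.add hpsd).add PosSemidef.one
  have hP : (Ahat + 1).PosSemidef := hpsd.add PosSemidef.one
  have hS : (cfc Real.sqrt (Ahat + 1)).IsHermitian := cfc_predicate _ _
  have hbounds := eigDesc_inv_mul_mul_inv_bounds hpsd hle hS (cfc_sqrt_mul_self hP)
  rw [invSqrt_eq hP]
  exact ⟨hbounds, Real.sqrt_le_sqrt <|
    frobSq_matLog_le (hA.inv_mul_mul_inv hS).isHermitian hA.isHermitian hbounds⟩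

theorem stmt18 {n : ℕ} (A Ahat : Matrix (Fin n) (Fin n) ℝ) (hAs : A.IsSymm) (hAhs : Ahat.IsSymm)
    (hpsd : Ahat.PosSemidef) (hle : (A - Ahat).PosSemidef) :
    (∀ i : Fin n,
        1 ≤ eigDesc (invSqrt (Ahat + 1) * (A + 1) * invSqrt (Ahat + 1)) i ∧
          eigDesc (invSqrt (Ahat + 1) * (A + 1) * invSqrt (Ahat + 1)) i ≤ eigDesc (A + 1) i) ∧
      Real.sqrt (frobSq (matLog (invSqrt (Ahat + 1) * (A + 1) * invSqrt (Ahat + 1))))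
        ≤ Real.sqrt (frobSq (matLog (A + 1))) :=
  stmt18_general A Ahat hpsd hle
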